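/- Define the squared fidelity distance on the open unit ball of ℝ³ by Δ^F(s,s')² = 1 − (1/2)(1 + s·s' + √((1−‖s‖²)(1−‖s'‖²))). Its same-point Hessian at s (with ‖s‖ < 1) is H_s^F = (1/2)(I + s sᵀ/(1−‖s‖²)), and its positive square root is √(H_s^F) = (1/√2)(I + (1/√(1−‖s‖²) − 1) s sᵀ/‖s‖²) for s ≠ 0. -/

import Mathlib

open Matrix

/-- The Hessian matrix of `f : ℝ^k → ℝ` at `a`, via iterated coordinate derivatives. -/
noncomputable def hessian {k : ℕ} (f : (Fin k → ℝ) → ℝ) (a : Fin k → ℝ) :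
    Matrix (Fin k) (Fin k) ℝ :=
  fun α β => fderiv ℝ (fun x => fderiv ℝ f x (Pi.single β 1)) a (Pi.single α 1)

/-- The square root of a positive semidefinite matrix, as `Matrix.PosSemidef.sqrt` was defined
in Mathlib of December 2024 (removed since). -/
noncomputable def Matrix.PosSemidef.sqrt {n : Type*} {𝕜 : Type*} [Fintype n] [RCLike 𝕜]
    [PartialOrder 𝕜] [DecidableEq n] {A : Matrix n n 𝕜} (hA : PosSemidef A) : Matrix n n 𝕜 :=
  hA.1.eigenvectorUnitary.1 * diagonal ((RCLike.ofReal : ℝ → 𝕜) ∘ (hA.1.eigenvalues · |>.sqrt)) *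
    (star hA.1.eigenvectorUnitary : Matrix n n 𝕜)

noncomputable def lin3 (a : Fin 3 → ℝ) : (Fin 3 → ℝ) →L[ℝ] ℝ :=
  ∑ i, a i • (ContinuousLinearMap.proj i : (Fin 3 → ℝ) →L[ℝ] ℝ)

lemma lin3_apply (a v : Fin 3 → ℝ) : lin3 a v = a ⬝ᵥ v := by
  simp [lin3, dotProduct, ContinuousLinearMap.sum_apply]

lemma hasFDerivAt_const_dot (a x : Fin 3 → ℝ) :
    HasFDerivAt (fun y : Fin 3 → ℝ => a ⬝ᵥ y) (lin3 a) x := by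
  have : (fun y : Fin 3 → ℝ => a ⬝ᵥ y) = fun y => ∑ i, a i * y i := rfl
  rw [this, lin3]
  have hp : ∀ i, HasFDerivAt (fun y : Fin 3 → ℝ => y i)
      (ContinuousLinearMap.proj i : (Fin 3 → ℝ) →L[ℝ] ℝ) x :=
    fun i => hasFDerivAt_apply i x
  exact HasFDerivAt.fun_sum fun i _ => (hp i).const_mul (a i)

lemma hasFDerivAt_dot_self (x : Fin 3 → ℝ) :
    HasFDerivAt (fun y : Fin 3 → ℝ => y ⬝ᵥ y) ((2 : ℝ) • lin3 x) x := by
  have h : (fun y : Fin 3 → ℝ => y ⬝ᵥ y) = fun y => ∑ i, y i * y i := rfl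
  rw [h]
  have hp : ∀ i, HasFDerivAt (fun y : Fin 3 → ℝ => y i)
      (ContinuousLinearMap.proj i : (Fin 3 → ℝ) →L[ℝ] ℝ) x :=
    fun i => hasFDerivAt_apply i x
  have := HasFDerivAt.fun_sum (fun i (_ : i ∈ Finset.univ) => (hp i).mul (hp i))
  refine this.congr_fderiv (Eq.symm ?_)
  ext v
  simp [lin3, ContinuousLinearMap.sum_apply, Finset.sum_add_distrib, two_mul,
    Finset.mul_sum, mul_comm]
  rw [← Finset.sum_add_distrib]
  exact Finset.sum_congr rfl fun i _ => by ring

/-- derivative of the fidelity-type function on the open unit ball -/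
lemma hasFDerivAt_fid (s x : Fin 3 → ℝ) (hx : x ⬝ᵥ x < 1) (hc : 0 < 1 - s ⬝ᵥ s) :
    HasFDerivAt (fun s' : Fin 3 → ℝ => 1 - (1 / 2) * (1 + s ⬝ᵥ s' +
        Real.sqrt ((1 - s' ⬝ᵥ s') * (1 - s ⬝ᵥ s))))
      ((-(1/2) : ℝ) • lin3 s +
        ((1 - s ⬝ᵥ s) / (2 * Real.sqrt ((1 - x ⬝ᵥ x) * (1 - s ⬝ᵥ s)))) • lin3 x) x := by
  set c := 1 - s ⬝ᵥ s with hcdef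
  have hx1 : 0 < 1 - x ⬝ᵥ x := by linarith
  have hne : (1 - x ⬝ᵥ x) * c ≠ 0 := by positivity
  have hu := ((hasFDerivAt_dot_self x).const_sub 1).mul_const c
  have hsqF := hu.sqrt hne
  have h1 := (((hasFDerivAt_const_dot s x).const_add 1).add hsqF)
  have h2 := (h1.const_mul (1/2 : ℝ)).const_sub 1
  refine h2.congr_fderiv (Eq.symm ?_)
  ext v
  simp only [ContinuousLinearMap.add_apply, ContinuousLinearMap.coe_smul', Pi.smul_apply,
    ContinuousLinearMap.smulRight_apply, ContinuousLinearMap.neg_apply,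
    ContinuousLinearMap.coe_sub', Pi.sub_apply, lin3_apply, smul_eq_mul, one_div]
  ring

lemma vecMulVec_mulVec' (s x : Fin 3 → ℝ) :
    vecMulVec s s *ᵥ x = (s ⬝ᵥ x) • s := by
  funext i
  simp [mulVec, vecMulVec_apply, dotProduct, Finset.mul_sum, mul_comm, mul_assoc, mul_left_comm]

lemma vecMulVec_sq (s : Fin 3 → ℝ) :
    vecMulVec s s * vecMulVec s s = (s ⬝ᵥ s) • vecMulVec s s := by
  ext i j
  simp [Matrix.mul_apply, vecMulVec_apply, dotProduct, Matrix.smul_apply, Finset.sum_mul,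
    Finset.mul_sum]
  exact Finset.sum_congr rfl fun k _ => by ring

open scoped MatrixOrder in
lemma psd_sqrt_eq {A : Matrix (Fin 3) (Fin 3) ℝ} (hA : A.PosSemidef) :
    hA.sqrt = CFC.sqrt A := by
  rw [CFC.sqrt_eq_cfc, cfc_nnreal_eq_real _ A hA.nonneg, hA.1.cfc_eq, IsHermitian.cfc,
    Unitary.conjStarAlgAut_apply]
  unfold Matrix.PosSemidef.sqrt
  congr 3
  funext i
  simp only [Function.comp_apply, Real.coe_sqrt, Real.coe_toNNReal']
  rw [max_eq_left (hA.eigenvalues_nonneg i)]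

open scoped MatrixOrder in
lemma psd_sqrt_unique {A B : Matrix (Fin 3) (Fin 3) ℝ} (hA : A.PosSemidef) (hB : B.PosSemidef)
    (h : B ^ 2 = A) : hA.sqrt = B := by
  rw [psd_sqrt_eq hA]
  exact CFC.sqrt_unique (by rw [← pow_two, h]) hB.nonneg

/-- the squared fidelity distance
`Δ^F(s',s)² = 1 - (1/2)(1 + s·s' + √((1-‖s'‖²)(1-‖s‖²)))` on the open unit ball
of ℝ³ has same-point Hessian `H_s^F = (1/2)(I + ssᵀ/(1-‖s‖²))`, whose positive
square root is `(1/√2)(I + (1/√(1-‖s‖²) - 1) ssᵀ/‖s‖²)` for `s ≠ 0`. -/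
theorem stmt12 (s : Fin 3 → ℝ) (h0 : s ≠ 0) (hs : s ⬝ᵥ s < 1)
    (hH : ((1 / 2 : ℝ) • ((1 : Matrix (Fin 3) (Fin 3) ℝ) +
        (1 - s ⬝ᵥ s)⁻¹ • vecMulVec s s)).PosSemidef) :
    hessian (fun s' => 1 - (1 / 2) * (1 + s ⬝ᵥ s' +
        Real.sqrt ((1 - s' ⬝ᵥ s') * (1 - s ⬝ᵥ s)))) s =
      (1 / 2 : ℝ) • ((1 : Matrix (Fin 3) (Fin 3) ℝ) +
        (1 - s ⬝ᵥ s)⁻¹ • vecMulVec s s) ∧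
    hH.sqrt = (Real.sqrt 2)⁻¹ •
      ((1 : Matrix (Fin 3) (Fin 3) ℝ) +
        ((Real.sqrt (1 - s ⬝ᵥ s))⁻¹ - 1) • ((s ⬝ᵥ s)⁻¹ • vecMulVec s s)) := by
  constructor
  · -- the Hessian computation
    have hc : 0 < 1 - s ⬝ᵥ s := by linarith
    set c := 1 - s ⬝ᵥ s with hcdef
    have hcne : c ≠ 0 := ne_of_gt hc
    have hR : Real.sqrt ((1 - s ⬝ᵥ s) * c) = c := by
      rw [← hcdef]; exact Real.sqrt_mul_self hc.le
    have hcont : Continuous (fun x : Fin 3 → ℝ => x ⬝ᵥ x) := by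
      unfold dotProduct
      exact continuous_finset_sum _ fun i _ => (continuous_apply i).mul (continuous_apply i)
    have hUopen : IsOpen {x : Fin 3 → ℝ | x ⬝ᵥ x < 1} := isOpen_lt hcont continuous_const
    ext α β
    unfold hessian
    have hev : (fun x => fderiv ℝ (fun s' => 1 - (1 / 2) * (1 + s ⬝ᵥ s' +
          Real.sqrt ((1 - s' ⬝ᵥ s') * (1 - s ⬝ᵥ s)))) x (Pi.single β 1)) =ᶠ[nhds s]
        (fun x => -(1/2) * s β + (c / (2 * Real.sqrt ((1 - x ⬝ᵥ x) * c))) * x β) := by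
      filter_upwards [hUopen.mem_nhds hs] with x hx
      rw [(hasFDerivAt_fid s x hx hc).fderiv]
      simp only [ContinuousLinearMap.add_apply, ContinuousLinearMap.coe_smul', Pi.smul_apply,
        lin3_apply, dotProduct_single, smul_eq_mul, mul_one]
      rfl
    rw [hev.fderiv_eq]
    have hin : HasDerivAt (fun y : ℝ => (1 - y) * c) (-1 * c) (s ⬝ᵥ s) :=
      ((hasDerivAt_id _).const_sub 1).mul_const c
    have hne : (1 - s ⬝ᵥ s) * c ≠ 0 := by positivity
    have hsq : HasDerivAt (fun y : ℝ => Real.sqrt ((1 - y) * c))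
        ((-1 * c) / (2 * Real.sqrt ((1 - s ⬝ᵥ s) * c))) (s ⬝ᵥ s) := hin.sqrt hne
    have hden : HasDerivAt (fun y : ℝ => 2 * Real.sqrt ((1 - y) * c))
        (2 * ((-1 * c) / (2 * Real.sqrt ((1 - s ⬝ᵥ s) * c)))) (s ⬝ᵥ s) := hsq.const_mul 2
    have hdenne : 2 * Real.sqrt ((1 - s ⬝ᵥ s) * c) ≠ 0 := by rw [hR]; positivity
    have hφ : HasDerivAt (fun y : ℝ => c / (2 * Real.sqrt ((1 - y) * c)))
        ((0 * (2 * Real.sqrt ((1 - s ⬝ᵥ s) * c)) -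
          c * (2 * ((-1 * c) / (2 * Real.sqrt ((1 - s ⬝ᵥ s) * c))))) /
          (2 * Real.sqrt ((1 - s ⬝ᵥ s) * c)) ^ 2) (s ⬝ᵥ s) :=
      (hasDerivAt_const _ c).div hden hdenne
    have hA : HasFDerivAt (fun x : Fin 3 → ℝ => c / (2 * Real.sqrt ((1 - x ⬝ᵥ x) * c)))
        (((0 * (2 * Real.sqrt ((1 - s ⬝ᵥ s) * c)) -
          c * (2 * ((-1 * c) / (2 * Real.sqrt ((1 - s ⬝ᵥ s) * c))))) /
          (2 * Real.sqrt ((1 - s ⬝ᵥ s) * c)) ^ 2) • ((2:ℝ) • lin3 s)) s :=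
      by have := HasDerivAt.comp_hasFDerivAt_of_eq s hφ (hasFDerivAt_dot_self s) rfl
         exact this
    have hB : HasFDerivAt (fun x : Fin 3 → ℝ => x β)
        (ContinuousLinearMap.proj β : (Fin 3 → ℝ) →L[ℝ] ℝ) s := hasFDerivAt_apply β s
    have hG := (hA.fun_mul hB).const_add (-(1/2) * s β)
    rw [hG.fderiv]
    simp only [ContinuousLinearMap.add_apply, ContinuousLinearMap.coe_smul', Pi.smul_apply,
      ContinuousLinearMap.proj_apply, lin3_apply, dotProduct_single, smul_eq_mul,
      Matrix.smul_apply, Matrix.add_apply, Matrix.one_apply, Matrix.vecMulVec_apply,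
      Pi.single_apply, hR]
    by_cases h : α = β
    · subst h; simp only [if_pos rfl]; field_simp; ring
    · simp only [if_neg h, if_neg (Ne.symm h)]; field_simp; ring
  · -- the square root
    have ht : 0 < s ⬝ᵥ s := by
      rcases lt_or_eq_of_le (Finset.sum_nonneg fun i _ => mul_self_nonneg (s i) :
        (0:ℝ) ≤ s ⬝ᵥ s) with h | h
      · exact h
      · exact absurd (dotProduct_self_eq_zero.mp h.symm) h0
    have hc : 0 < 1 - s ⬝ᵥ s := by linarith
    set t := s ⬝ᵥ s with htdef
    set c := 1 - s ⬝ᵥ s with hcdef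
    have hsc : 0 < Real.sqrt c := Real.sqrt_pos.mpr hc
    have hscsq : Real.sqrt c * Real.sqrt c = c := Real.mul_self_sqrt hc.le
    have hsc1 : Real.sqrt c ≤ 1 := by
      rw [show (1:ℝ) = Real.sqrt 1 from Real.sqrt_one.symm]
      exact Real.sqrt_le_sqrt (by linarith)
    have hb : (0:ℝ) ≤ (Real.sqrt c)⁻¹ - 1 :=
      sub_nonneg.mpr ((one_le_inv₀ hsc).mpr hsc1)
    set b : ℝ := (Real.sqrt c)⁻¹ - 1 with hbdef
    set P : Matrix (Fin 3) (Fin 3) ℝ := vecMulVec s s with hPdef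
    set B : Matrix (Fin 3) (Fin 3) ℝ := (Real.sqrt 2)⁻¹ •
        ((1 : Matrix (Fin 3) (Fin 3) ℝ) + b • (t⁻¹ • P)) with hBdef
    have hBpsd : B.PosSemidef := by
      refine Matrix.PosSemidef.of_dotProduct_mulVec_nonneg ?_ ?_
      · unfold Matrix.IsHermitian
        ext i j
        simp only [hBdef, hPdef, conjTranspose_apply, Matrix.smul_apply, Matrix.add_apply,
          Matrix.one_apply, vecMulVec_apply, smul_eq_mul, star_trivial]
        by_cases h : i = j
        · subst h; ring
        · rw [if_neg h, if_neg (Ne.symm h)]; ring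
      · intro x
        have hmv : B *ᵥ x = (Real.sqrt 2)⁻¹ • (x + (b * t⁻¹ * (s ⬝ᵥ x)) • s) := by
          rw [hBdef, smul_mulVec, add_mulVec, one_mulVec, smul_mulVec,
            smul_mulVec, hPdef, vecMulVec_mulVec' s x, smul_smul, smul_smul]
        rw [hmv]
        simp only [star_trivial, dotProduct_smul, dotProduct_add, smul_eq_mul]
        have h1 : (0:ℝ) ≤ x ⬝ᵥ x := Finset.sum_nonneg fun i _ => mul_self_nonneg (x i)
        rw [dotProduct_comm x s]
        have key : (0:ℝ) ≤ b * t⁻¹ * (s ⬝ᵥ x) * (s ⬝ᵥ x) := by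
          rw [mul_assoc]
          exact mul_nonneg (mul_nonneg hb (inv_nonneg.mpr ht.le)) (mul_self_nonneg _)
        exact mul_nonneg (inv_nonneg.mpr (Real.sqrt_nonneg 2)) (add_nonneg h1 key)
    have hsq : B ^ 2 = (1 / 2 : ℝ) • ((1 : Matrix (Fin 3) (Fin 3) ℝ) +
        (1 - s ⬝ᵥ s)⁻¹ • P) := by
      rw [pow_two, hBdef, Matrix.smul_mul, Matrix.mul_smul, smul_smul]
      have h2 : (Real.sqrt 2)⁻¹ * (Real.sqrt 2)⁻¹ = (1/2 : ℝ) := by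
        rw [← mul_inv, Real.mul_self_sqrt (by norm_num : (0:ℝ) ≤ 2)]
        norm_num
      have hexp : ((1 : Matrix (Fin 3) (Fin 3) ℝ) + b • (t⁻¹ • P)) *
          ((1 : Matrix (Fin 3) (Fin 3) ℝ) + b • (t⁻¹ • P)) =
          1 + (2 * (b * t⁻¹) + (b * t⁻¹) * (b * t⁻¹) * t) • P := by
        rw [mul_add, mul_one, add_mul, one_mul, smul_smul, Matrix.smul_mul, Matrix.mul_smul,
          smul_smul, vecMulVec_sq, ← htdef]
        module
      have htne : t ≠ 0 := ne_of_gt ht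
      have hcne : c ≠ 0 := ne_of_gt hc
      have huinv : (Real.sqrt c)⁻¹ * (Real.sqrt c)⁻¹ = c⁻¹ := by rw [← mul_inv, hscsq]
      have h1c : 1 - c = t := by rw [hcdef]; ring
      have hbb : 2 * b + b * b = c⁻¹ - 1 := by
        calc 2 * b + b * b = (Real.sqrt c)⁻¹ * (Real.sqrt c)⁻¹ - 1 := by rw [hbdef]; ring
          _ = c⁻¹ - 1 := by rw [huinv]
      have hscal : 2 * (b * t⁻¹) + (b * t⁻¹) * (b * t⁻¹) * t = c⁻¹ := by
        have e1 : 2 * (b * t⁻¹) + (b * t⁻¹) * (b * t⁻¹) * t = (2 * b + b * b) * t⁻¹ := by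
          field_simp
        rw [e1, hbb, show t = 1 - c from h1c.symm]
        have h1cne : (1:ℝ) - c ≠ 0 := by rw [h1c]; exact htne
        field_simp
      rw [h2, hexp, hscal, ← hcdef]
    exact psd_sqrt_unique hH hBpsd hsq
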